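/- Fix m ∈ ℕ and α, ε ∈ (0,1), and let k*: [0,1]^{2m} → {0,1,…,m} be the SynthBH rejection index viewed as a function of 𝐩 = (p_1,…,p_m,p̃_1,…,p̃_m). Then for every r ∈ {0,1,…,m}, the sublevel set B_r = {𝐩 ∈ [0,1]^{2m} : k*(𝐩) ≤ r} is an increasing set: if 𝐩 ∈ B_r and 𝐩 ⪯ 𝐪 coordinatewise, then 𝐪 ∈ B_r. -/

import Mathlib

noncomputable section

/-- The synthetic-powered p-value at level `δ`: `p̃^δ = p ∧ (p̃ ∨ (p − δ))`. -/
def sp (p pt δ : ℝ) : ℝ := min p (max pt (p - δ))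

/-- The `k`-th smallest element (1-indexed) of a finite family of reals. -/
def kthSmallest {m : ℕ} (v : Fin m → ℝ) (k : ℕ) : ℝ :=
  (List.insertionSort (· ≤ ·) (List.ofFn v)).getD (k - 1) 0

/-- The vector of synthetic-powered p-values with rank-adaptive guardrail `δ = kε/m`. -/
def spVec (m : ℕ) (ε : ℝ) (p pt : Fin m → ℝ) (k : ℕ) : Fin m → ℝ :=
  fun j => sp (p j) (pt j) (k * ε / m)

/-- The SynthBH rejection index `k* = max {k ∈ [m] : m·p̃_{(k)}^{kε/m}/k ≤ α}` (0 if none). -/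
def kStar (m : ℕ) (α ε : ℝ) (p pt : Fin m → ℝ) : ℕ :=
  ((Finset.Icc 1 m).filter
    (fun k => (m : ℝ) * kthSmallest (spVec m ε p pt k) k / k ≤ α)).sup id

/-- The SynthBH rejection index viewed as a function of the concatenated vector
`𝐩 = (p_1,…,p_m,p̃_1,…,p̃_m) ∈ ℝ^{2m}`. -/
def kStarVec (m : ℕ) (α ε : ℝ) (v : Fin (m + m) → ℝ) : ℕ :=
  kStar m α ε (fun j => v (Fin.castAdd m j)) (fun j => v (Fin.natAdd m j))

/-- On a sorted list, `l[i] ≤ x` iff at least `i+1` elements are `≤ x`. -/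
lemma sorted_getElem_le_iff {l : List ℝ} (hl : l.Pairwise (· ≤ ·)) {i : ℕ}
    (hi : i < l.length) (x : ℝ) :
    l[i] ≤ x ↔ i + 1 ≤ l.countP (fun a => decide (a ≤ x)) := by
  constructor
  · intro h
    have hsplit : l.countP (fun a => decide (a ≤ x)) =
        (l.take (i+1)).countP (fun a => decide (a ≤ x)) +
        (l.drop (i+1)).countP (fun a => decide (a ≤ x)) := by
      conv_lhs => rw [← List.take_append_drop (i+1) l]
      rw [List.countP_append]
    have htake : (l.take (i+1)).countP (fun a => decide (a ≤ x)) = i + 1 := by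
      rw [List.countP_eq_length.2, List.length_take]
      · omega
      · intro a ha
        rw [List.mem_take_iff_getElem] at ha
        obtain ⟨j, hj, rfl⟩ := ha
        have hj' : j < l.length := (Nat.lt_min.1 hj).2
        have hji : l[j] ≤ l[i] := by
          rcases Nat.lt_or_ge j i with h' | h'
          · simpa using List.Pairwise.rel_get_of_lt hl (a := ⟨j, hj'⟩) (b := ⟨i, hi⟩) h'
          · have : j = i := by omega
            subst this; exact le_rfl
        simpa using le_trans hji h
    omega
  · intro h
    by_contra hgt
    push_neg at hgt
    have hdrop : (l.drop i).countP (fun a => decide (a ≤ x)) = 0 := by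
      rw [List.countP_eq_zero]
      intro a ha
      rw [List.mem_drop_iff_getElem] at ha
      obtain ⟨j, hj, rfl⟩ := ha
      have hii : l[i] ≤ l[i + j] := by
        rcases Nat.eq_or_lt_of_le (Nat.le_add_right i j) with h' | h'
        · simp [← h']
        · simpa using List.Pairwise.rel_get_of_lt hl
            (a := ⟨i, hi⟩) (b := ⟨i + j, by omega⟩) h'
      simp only [decide_eq_true_eq]
      intro hax
      exact absurd (le_trans hii hax) (not_le.2 hgt)
    have hsplit : l.countP (fun a => decide (a ≤ x)) =
        (l.take i).countP (fun a => decide (a ≤ x)) +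
        (l.drop i).countP (fun a => decide (a ≤ x)) := by
      conv_lhs => rw [← List.take_append_drop i l]
      rw [List.countP_append]
    have hle := List.countP_le_length (l := l.take i) (p := fun a => decide (a ≤ x))
    rw [List.length_take] at hle
    omega

lemma countP_ofFn_le {m : ℕ} (x : ℝ) (f g : Fin m → ℝ) (h : ∀ j, f j ≤ g j) :
    (List.ofFn g).countP (fun a => decide (a ≤ x)) ≤
    (List.ofFn f).countP (fun a => decide (a ≤ x)) := by
  induction m with
  | zero => simp
  | succ n ih =>
    rw [List.ofFn_succ, List.ofFn_succ, List.countP_cons, List.countP_cons]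
    have h1 := ih (fun j => f j.succ) (fun j => g j.succ) (fun j => h j.succ)
    have hc : (if decide (g 0 ≤ x) = true then 1 else 0) ≤
        (if decide (f 0 ≤ x) = true then 1 else 0) := by
      by_cases hg : g 0 ≤ x
      · simp [hg, le_trans (h 0) hg]
      · simp [hg]
    omega

lemma kthSmallest_mono {m : ℕ} (f g : Fin m → ℝ) (h : ∀ j, f j ≤ g j)
    {k : ℕ} (hk1 : 1 ≤ k) (hkm : k ≤ m) :
    kthSmallest f k ≤ kthSmallest g k := by
  set l₁ := List.insertionSort (· ≤ ·) (List.ofFn f) with hl₁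
  set l₂ := List.insertionSort (· ≤ ·) (List.ofFn g) with hl₂
  have hlen₁ : l₁.length = m := by
    rw [hl₁, List.length_insertionSort, List.length_ofFn]
  have hlen₂ : l₂.length = m := by
    rw [hl₂, List.length_insertionSort, List.length_ofFn]
  have hi₁ : k - 1 < l₁.length := by omega
  have hi₂ : k - 1 < l₂.length := by omega
  have hs₁ : l₁.Pairwise (· ≤ ·) := List.pairwise_insertionSort _ _
  have hs₂ : l₂.Pairwise (· ≤ ·) := List.pairwise_insertionSort _ _
  rw [kthSmallest, kthSmallest, List.getD_eq_getElem _ _ hi₁, List.getD_eq_getElem _ _ hi₂]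
  set x := l₂[k-1] with hx
  have h2 : k - 1 + 1 ≤ l₂.countP (fun a => decide (a ≤ x)) :=
    (sorted_getElem_le_iff hs₂ hi₂ x).1 le_rfl
  have hperm₁ : l₁.countP (fun a => decide (a ≤ x)) =
      (List.ofFn f).countP (fun a => decide (a ≤ x)) :=
    (List.perm_insertionSort _ _).countP_eq _
  have hperm₂ : l₂.countP (fun a => decide (a ≤ x)) =
      (List.ofFn g).countP (fun a => decide (a ≤ x)) :=
    (List.perm_insertionSort _ _).countP_eq _
  have h1 : k - 1 + 1 ≤ l₁.countP (fun a => decide (a ≤ x)) := by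
    rw [hperm₁]
    rw [hperm₂] at h2
    exact le_trans h2 (countP_ofFn_le x f g h)
  exact (sorted_getElem_le_iff hs₁ hi₁ x).2 h1

lemma spVec_mono {m : ℕ} (ε : ℝ) (p pt q qt : Fin m → ℝ)
    (hp : ∀ j, p j ≤ q j) (hpt : ∀ j, pt j ≤ qt j) (k : ℕ) (j : Fin m) :
    spVec m ε p pt k j ≤ spVec m ε q qt k j := by
  unfold spVec sp
  exact min_le_min (hp j)
    (max_le_max (hpt j) (sub_le_sub_right (hp j) _))

/-- **Sublevel sets of the SynthBH rejection index are increasing sets**: for each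
`r ∈ {0,1,…,m}`, if `k*(𝐩) ≤ r` and `𝐩 ⪯ 𝐪` coordinatewise (with `𝐩, 𝐪 ∈ [0,1]^{2m}`),
then `k*(𝐪) ≤ r`. -/
theorem kStar_sublevel_increasing
    (m : ℕ) (α ε : ℝ) (hα : α ∈ Set.Ioo (0 : ℝ) 1) (hε : ε ∈ Set.Ioo (0 : ℝ) 1) :
    ∀ r ≤ m, ∀ v u : Fin (m + m) → ℝ,
      (∀ i, v i ∈ Set.Icc (0 : ℝ) 1) → (∀ i, u i ∈ Set.Icc (0 : ℝ) 1) →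
      kStarVec m α ε v ≤ r → (∀ i, v i ≤ u i) → kStarVec m α ε u ≤ r := by
  intro r _hr v u _hv _hu hkv hle
  unfold kStarVec kStar at hkv ⊢
  apply Finset.sup_le
  intro k hk
  rw [Finset.mem_filter, Finset.mem_Icc] at hk
  obtain ⟨⟨hk1, hkm⟩, hcond⟩ := hk
  -- the condition also holds for `v`
  have hmono : kthSmallest (spVec m ε (fun j => v (Fin.castAdd m j))
      (fun j => v (Fin.natAdd m j)) k) k ≤
      kthSmallest (spVec m ε (fun j => u (Fin.castAdd m j))
      (fun j => u (Fin.natAdd m j)) k) k :=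
    kthSmallest_mono _ _
      (spVec_mono ε _ _ _ _ (fun j => hle _) (fun j => hle _) k) hk1 hkm
  have hcondv : (m : ℝ) * kthSmallest (spVec m ε (fun j => v (Fin.castAdd m j))
      (fun j => v (Fin.natAdd m j)) k) k / k ≤ α := by
    refine le_trans ?_ hcond
    have hkpos : (0 : ℝ) < (k : ℝ) := by exact_mod_cast hk1
    gcongr
  calc id k = k := rfl
    _ ≤ _ := Finset.le_sup (f := id)
        (by rw [Finset.mem_filter, Finset.mem_Icc]; exact ⟨⟨hk1, hkm⟩, hcondv⟩) |>.trans hkv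

end
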